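/- Suppose n is even and k = n/2 − 1, so that ν := k − n/2 + 1 = 0. Then the consecutive-generation ratio diverges logarithmically at the origin: γ_k(z) / log(1/z) → n/B as z → 0⁺. -/

import Mathlib

open Real MeasureTheory Set Filter Topology

/-- The steady-state generation-`k` density in the normalized distance
`z = |x|√(λ/D)` from the origin:
`𝒜_k(z) = (μ(λB)^k/(k!(4πD)^{n/2})) ∫₀^∞ s^{k−n/2} exp(−λs − z²/(4λs)) ds`. -/
noncomputable def steadyDensity (n : ℕ) (lam D B mu : ℝ) (k : ℕ) (z : ℝ) : ℝ :=
  (mu * (lam * B) ^ k / ((Nat.factorial k : ℝ) * (4 * π * D) ^ ((n : ℝ) / 2))) *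
    ∫ s in Set.Ioi (0:ℝ),
      s ^ ((k : ℝ) - (n : ℝ) / 2) * Real.exp (-lam * s - z ^ 2 / (4 * lam * s))

/-- The consecutive-generation ratio `γ_k(z) = 𝒜_k(z)/𝒜_{k+1}(z)`. -/
noncomputable def genRatio (n : ℕ) (lam D B mu : ℝ) (k : ℕ) (z : ℝ) : ℝ :=
  steadyDensity n lam D B mu k z / steadyDensity n lam D B mu (k + 1) z

/-! When `k + 1 = n/2` the power of `s` is `s⁻¹` in `𝒜_k` and `1` in `𝒜_{k+1}`, so up to the
factor `(k+1)/(λB)` the ratio `γ_k(z)` is `J(c)/I(c)` with `c = z²/(4λ)`, where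
`J(c) = ∫₀^∞ s⁻¹ e^{-λs-c/s} ds` and `I(c) = ∫₀^∞ e^{-λs-c/s} ds`.
Dominated convergence gives `I(c) → 1/λ`. Splitting at `c` and `1` gives `J(c) = log(1/c) + O(1)`:
on `(0, c]` the integrand is at most `1/c`, on `(c, 1]` it lies between `1/s - λ - c/s²` and `1/s`,
and on `(1, ∞)` it is at most `e^{-λs}`. As `log(1/c) = 2 log(1/z) + O(1)`, the ratio divided by
`log(1/z)` tends to `(k+1)/(λB) · 2λ = n/B`. -/

open Asymptotics

theorem MeasureTheory.IntegrableOn.integral_Ioi_eq_add_add {f : ℝ → ℝ} {a b d : ℝ}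
    (hf : IntegrableOn f (Ioi a)) (hab : a ≤ b) (hbd : b ≤ d) :
    ∫ x in Ioi a, f x = (∫ x in a..b, f x) + (∫ x in b..d, f x) + ∫ x in Ioi d, f x := by
  rw [add_assoc, intervalIntegral.integral_interval_add_Ioi (hf.mono_set (Ioi_subset_Ioi hab))
      (hf.mono_set (Ioi_subset_Ioi (hab.trans hbd))),
    intervalIntegral.integral_interval_add_Ioi hf (hf.mono_set (Ioi_subset_Ioi hab))]

theorem Filter.Tendsto.div_of_isBigO_sub_mul {α : Type*} {l : Filter α} {f L : α → ℝ} {r : ℝ}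
    (hL : Tendsto L l atTop) (h : (fun x => f x - r * L x) =O[l] fun _ => (1 : ℝ)) :
    Tendsto (fun x => f x / L x) l (𝓝 r) := by
  have hlo : (fun x => f x - r * L x) =o[l] L :=
    h.trans_isLittleO ((isLittleO_one_left_iff ℝ).2 (tendsto_norm_atTop_atTop.comp hL))
  have hsub := hlo.tendsto_div_nhds_zero.add_const r
  rw [zero_add] at hsub
  refine hsub.congr' ?_
  filter_upwards [hL.eventually_ne_atTop 0] with x hx
  field_simp
  ring

theorem tendsto_sq_div_nhdsGT_zero {a : ℝ} (ha : 0 < a) :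
    Tendsto (fun z : ℝ => z ^ 2 / a) (𝓝[>] 0) (𝓝[>] 0) := by
  refine tendsto_nhdsWithin_of_tendsto_nhds_of_eventually_within _ ?_ ?_
  · exact (((continuous_pow 2).div_const a).tendsto' 0 0 (by simp)).mono_left nhdsWithin_le_nhds
  · filter_upwards [self_mem_nhdsWithin] with z (hz : 0 < z)
    exact div_pos (pow_pos hz 2) ha

section Kernel

variable {a c : ℝ}

theorem integral_exp_neg_mul_Ioi (ha : 0 < a) (t : ℝ) :
    ∫ s in Ioi t, exp (-a * s) = exp (-a * t) / a := by
  rw [integral_exp_mul_Ioi (neg_neg_of_pos ha), neg_div_neg_eq]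

theorem exp_neg_mul_sub_div_le (hc : 0 ≤ c) {s : ℝ} (hs : 0 < s) :
    exp (-a * s - c / s) ≤ exp (-a * s) :=
  exp_le_exp.2 (sub_le_self _ (div_nonneg hc hs.le))

theorem inv_mul_exp_neg_mul_sub_div_le (hc : 0 < c) {s : ℝ} (hs : 0 < s) :
    s⁻¹ * exp (-a * s - c / s) ≤ c⁻¹ * exp (-a * s) := by
  rw [sub_eq_add_neg, exp_add, ← mul_assoc, mul_right_comm]
  refine mul_le_mul_of_nonneg_right ?_ (exp_pos _).le
  rw [exp_neg, ← mul_inv, inv_le_inv₀ (by positivity) hc]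
  calc c = s * (c / s) := by field_simp
    _ ≤ s * exp (c / s) := by gcongr; linarith [add_one_le_exp (c / s)]

theorem integrableOn_inv_mul_exp_neg_mul_sub_div (ha : 0 < a) (hc : 0 < c) :
    IntegrableOn (fun s => s⁻¹ * exp (-a * s - c / s)) (Ioi 0) := by
  refine ((exp_neg_integrableOn_Ioi 0 ha).const_mul c⁻¹).mono' (by fun_prop) ?_
  filter_upwards [ae_restrict_mem measurableSet_Ioi] with s (hs : 0 < s)
  rw [norm_of_nonneg (by positivity)]
  exact inv_mul_exp_neg_mul_sub_div_le hc hs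

theorem exp_neg_mul_sub_div_le_one (ha : 0 ≤ a) (hc : 0 ≤ c) {s : ℝ} (hs : 0 ≤ s) :
    exp (-a * s - c / s) ≤ 1 :=
  exp_le_one_iff.2 (by nlinarith [div_nonneg hc hs])

theorem inv_sub_sub_div_sq_le_inv_mul_exp {s : ℝ} (hs : 0 < s) :
    s⁻¹ - a - c / s ^ 2 ≤ s⁻¹ * exp (-a * s - c / s) := by
  have hlin : s⁻¹ - a - c / s ^ 2 = s⁻¹ * ((-a * s - c / s) + 1) := by field_simp; ring
  rw [hlin]
  exact mul_le_mul_of_nonneg_left (add_one_le_exp _) (inv_nonneg.2 hs.le)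

theorem intervalIntegrable_inv_sub_const_sub_div_sq {u v : ℝ} (hu : 0 < u) (hv : 0 < v) :
    IntervalIntegrable (fun s => s⁻¹ - a - c / s ^ 2) volume u v :=
  ContinuousOn.intervalIntegrable fun s hs =>
    have : s ≠ 0 := (lt_of_lt_of_le (lt_min hu hv) hs.1).ne'
    (by fun_prop (disch := simp [*]) : ContinuousAt _ s).continuousWithinAt

theorem integral_inv_sub_const_sub_div_sq {u v : ℝ} (hu : 0 < u) (hv : 0 < v) :
    ∫ s in u..v, (s⁻¹ - a - c / s ^ 2) = log (v / u) - a * (v - u) + c * (v⁻¹ - u⁻¹) := by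
  have hderiv : ∀ s ∈ uIcc u v,
      HasDerivAt (fun s => log s - a * s + c * s⁻¹) (s⁻¹ - a - c / s ^ 2) s := by
    intro s hs
    have hs0 : s ≠ 0 := (lt_of_lt_of_le (lt_min hu hv) hs.1).ne'
    refine (((hasDerivAt_log hs0).sub ((hasDerivAt_id' s).const_mul a)).add
      ((hasDerivAt_inv hs0).const_mul c)).congr_deriv ?_
    ring
  rw [intervalIntegral.integral_eq_sub_of_hasDerivAt hderiv
      (intervalIntegrable_inv_sub_const_sub_div_sq hu hv), log_div hv.ne' hu.ne']
  ring

theorem tendsto_integral_exp_neg_mul_sub_div (ha : 0 < a) :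
    Tendsto (fun c => ∫ s in Ioi 0, exp (-a * s - c / s)) (𝓝[>] 0) (𝓝 a⁻¹) := by
  have hlim : ∫ s in Ioi 0, exp (-a * s - 0 / s) = a⁻¹ := by
    simp only [zero_div, sub_zero]
    rw [integral_exp_neg_mul_Ioi ha, mul_zero, exp_zero, one_div]
  rw [← hlim]
  refine tendsto_integral_filter_of_dominated_convergence (fun s => exp (-a * s))
    (Eventually.of_forall fun c => by fun_prop) ?_ (exp_neg_integrableOn_Ioi 0 ha) ?_
  · filter_upwards [self_mem_nhdsWithin] with c (hc : 0 < c)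
    filter_upwards [ae_restrict_mem measurableSet_Ioi] with s (hs : 0 < s)
    rw [norm_of_nonneg (exp_pos _).le]
    exact exp_neg_mul_sub_div_le hc.le hs
  · refine Eventually.of_forall fun s => ?_
    exact ((by fun_prop : Continuous fun c => exp (-a * s - c / s)).tendsto 0).mono_left
      nhdsWithin_le_nhds

theorem intervalIntegrable_inv_mul_exp_neg_mul_sub_div (ha : 0 < a) (hc : 0 < c) {u v : ℝ}
    (hu : 0 ≤ u) (hv : 0 ≤ v) :
    IntervalIntegrable (fun s => s⁻¹ * exp (-a * s - c / s)) volume u v :=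
  have hf := integrableOn_inv_mul_exp_neg_mul_sub_div ha hc
  ⟨hf.mono_set fun _ hs => hu.trans_lt hs.1, hf.mono_set fun _ hs => hv.trans_lt hs.1⟩

variable (ha : 0 < a) (hc : 0 < c) (hc1 : c ≤ 1)
include ha hc hc1

theorem integral_inv_mul_exp_neg_mul_sub_div_le :
    ∫ s in Ioi 0, s⁻¹ * exp (-a * s - c / s) ≤ log c⁻¹ + 1 + a⁻¹ := by
  have hf := integrableOn_inv_mul_exp_neg_mul_sub_div ha hc
  have hnear : ∫ s in (0)..c, s⁻¹ * exp (-a * s - c / s) ≤ 1 := calc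
    _ ≤ ∫ _ in (0)..c, c⁻¹ :=
      intervalIntegral.integral_mono_on_of_le_Ioo hc.le
        (intervalIntegrable_inv_mul_exp_neg_mul_sub_div ha hc le_rfl hc.le)
        intervalIntegrable_const
        fun s hs => (inv_mul_exp_neg_mul_sub_div_le hc hs.1).trans
          (mul_le_of_le_one_right (inv_nonneg.2 hc.le)
            (exp_le_one_iff.2 (by nlinarith [hs.1])))
    _ = 1 := by simp [hc.ne']
  have hmid : ∫ s in c..1, s⁻¹ * exp (-a * s - c / s) ≤ log c⁻¹ := calc
    _ ≤ ∫ s in c..1, s⁻¹ :=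
      intervalIntegral.integral_mono_on hc1
        (intervalIntegrable_inv_mul_exp_neg_mul_sub_div ha hc hc.le zero_le_one)
        (intervalIntegral.intervalIntegrable_inv
          (fun s hs => (hc.trans_le (uIcc_of_le hc1 ▸ hs).1).ne') continuousOn_id)
        fun s hs => mul_le_of_le_one_right (inv_nonneg.2 (hc.trans_le hs.1).le)
          (exp_neg_mul_sub_div_le_one ha.le hc.le (hc.trans_le hs.1).le)
    _ = log c⁻¹ := by rw [integral_inv_of_pos hc one_pos, one_div]
  have hfar : ∫ s in Ioi 1, s⁻¹ * exp (-a * s - c / s) ≤ a⁻¹ := calc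
    _ ≤ ∫ s in Ioi 1, exp (-a * s) :=
      setIntegral_mono_on (hf.mono_set (Ioi_subset_Ioi zero_le_one))
        (exp_neg_integrableOn_Ioi 1 ha) measurableSet_Ioi fun s (hs : 1 < s) =>
          (mul_le_of_le_one_left (exp_pos _).le (inv_le_one_of_one_le₀ hs.le)).trans
            (exp_neg_mul_sub_div_le hc.le (zero_lt_one.trans hs))
    _ = exp (-a) / a := by rw [integral_exp_neg_mul_Ioi ha, mul_one]
    _ ≤ a⁻¹ := by
      rw [div_eq_mul_inv]
      exact mul_le_of_le_one_left (inv_nonneg.2 ha.le) (exp_le_one_iff.2 (by linarith))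
  rw [hf.integral_Ioi_eq_add_add hc.le hc1]
  linarith

theorem log_inv_sub_le_integral_inv_mul_exp_neg_mul_sub_div :
    log c⁻¹ - (a + 1) ≤ ∫ s in Ioi 0, s⁻¹ * exp (-a * s - c / s) := by
  have hf := integrableOn_inv_mul_exp_neg_mul_sub_div ha hc
  have hnonneg : ∀ s, 0 ≤ s → 0 ≤ s⁻¹ * exp (-a * s - c / s) := fun s hs =>
    mul_nonneg (inv_nonneg.2 hs) (exp_pos _).le
  have hnear : 0 ≤ ∫ s in (0)..c, s⁻¹ * exp (-a * s - c / s) :=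
    intervalIntegral.integral_nonneg hc.le fun s hs => hnonneg s hs.1
  have hmid : log c⁻¹ - (a + 1) ≤ ∫ s in c..1, s⁻¹ * exp (-a * s - c / s) := calc
    _ ≤ log (1 / c) - a * (1 - c) + c * (1⁻¹ - c⁻¹) := by
      rw [one_div, inv_one, mul_sub c, mul_inv_cancel₀ hc.ne']
      nlinarith
    _ = ∫ s in c..1, (s⁻¹ - a - c / s ^ 2) := (integral_inv_sub_const_sub_div_sq hc one_pos).symm
    _ ≤ _ := intervalIntegral.integral_mono_on hc1
        (intervalIntegrable_inv_sub_const_sub_div_sq hc one_pos)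
        (intervalIntegrable_inv_mul_exp_neg_mul_sub_div ha hc hc.le zero_le_one)
        fun s hs => inv_sub_sub_div_sq_le_inv_mul_exp (hc.trans_le hs.1)
  have hfar : 0 ≤ ∫ s in Ioi 1, s⁻¹ * exp (-a * s - c / s) :=
    setIntegral_nonneg measurableSet_Ioi fun s (hs : 1 < s) =>
      hnonneg s (zero_le_one.trans hs.le)
  rw [hf.integral_Ioi_eq_add_add hc.le hc1]
  linarith

end Kernel

theorem isBigO_integral_inv_mul_exp_neg_mul_sub_div_sub_log {a : ℝ} (ha : 0 < a) :
    (fun c => (∫ s in Ioi 0, s⁻¹ * exp (-a * s - c / s)) - log c⁻¹) =O[𝓝[>] 0]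
      fun _ => (1 : ℝ) := by
  refine IsBigO.of_bound (a + 1 + a⁻¹) ?_
  filter_upwards [Ioc_mem_nhdsGT zero_lt_one] with c ⟨hc, hc1⟩
  have hup := integral_inv_mul_exp_neg_mul_sub_div_le ha hc hc1
  have hlow := log_inv_sub_le_integral_inv_mul_exp_neg_mul_sub_div ha hc hc1
  have : 0 < a⁻¹ := inv_pos.2 ha
  rw [norm_one, mul_one, Real.norm_eq_abs, abs_sub_le_iff]
  constructor <;> linarith

theorem tendsto_integral_inv_mul_exp_neg_mul_sub_sq_div_div_log {a : ℝ} (ha : 0 < a) :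
    Tendsto (fun z => (∫ s in Ioi 0, s⁻¹ * exp (-a * s - z ^ 2 / (4 * a) / s)) / log z⁻¹)
      (𝓝[>] 0) (𝓝 2) := by
  have hlog : Tendsto (fun z : ℝ => log z⁻¹) (𝓝[>] 0) atTop :=
    tendsto_log_atTop.comp tendsto_inv_nhdsGT_zero
  refine hlog.div_of_isBigO_sub_mul ?_
  have hO := ((isBigO_integral_inv_mul_exp_neg_mul_sub_div_sub_log ha).comp_tendsto
    (tendsto_sq_div_nhdsGT_zero (by positivity : 0 < 4 * a))).add
    (isBigO_const_const (log (4 * a)) one_ne_zero (𝓝[>] (0 : ℝ)))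
  refine hO.congr' ?_ EventuallyEq.rfl
  filter_upwards [self_mem_nhdsWithin] with z (hz : 0 < z)
  rw [Function.comp_apply, inv_div, log_div (by positivity) (by positivity), log_pow, log_inv]
  push_cast
  ring

theorem genRatio_eq {n : ℕ} {lam D B mu : ℝ} (hlam : lam ≠ 0) (hD : 0 < D) (hB : B ≠ 0)
    (hmu : mu ≠ 0) (k : ℕ) (z : ℝ) :
    genRatio n lam D B mu k z = (k + 1) / (lam * B) *
      ((∫ s in Ioi 0, s ^ ((k : ℝ) - n / 2) * exp (-lam * s - z ^ 2 / (4 * lam * s))) /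
        ∫ s in Ioi 0, s ^ ((k : ℝ) + 1 - n / 2) * exp (-lam * s - z ^ 2 / (4 * lam * s))) := by
  rw [genRatio, steadyDensity, steadyDensity, mul_div_mul_comm, Nat.factorial_succ]
  push_cast
  congr 1
  have : 0 < (4 * π * D) ^ ((n : ℝ) / 2) := by positivity
  field_simp
  ring

/-- For even `n` and `k = n/2 − 1` (so `ν = 0`), the consecutive-generation ratio
diverges logarithmically at the origin: `γ_k(z)/log(1/z) → n/B` as `z → 0⁺`. -/
theorem genRatio_log_divergence
    (n : ℕ) (hn : 2 ≤ n) (heven : Even n) (lam D B mu : ℝ)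
    (hlam : 0 < lam) (hD : 0 < D) (hB : 0 < B) (hmu : 0 < mu)
    (k : ℕ) (hk : k = n / 2 - 1) :
    Filter.Tendsto (fun z : ℝ => genRatio n lam D B mu k z / Real.log (1 / z))
      (nhdsWithin 0 (Set.Ioi 0)) (nhds ((n : ℝ) / B)) := by
  obtain ⟨m, rfl⟩ := heven
  have hk1 : (k : ℝ) + 1 = m := by exact_mod_cast (by omega : k + 1 = m)
  have hexp : (k : ℝ) - ↑(m + m) / 2 = -1 ∧ (k : ℝ) + 1 - ↑(m + m) / 2 = 0 := by
    push_cast; constructor <;> linarith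
  have hJ := tendsto_integral_inv_mul_exp_neg_mul_sub_sq_div_div_log hlam
  have hI := (tendsto_integral_exp_neg_mul_sub_div hlam).comp
    (tendsto_sq_div_nhdsGT_zero (by positivity : 0 < 4 * lam))
  have hlim := (hJ.div hI (inv_ne_zero hlam.ne')).const_mul ((k + 1) / (lam * B))
  convert hlim using 2 with z
  · rw [genRatio_eq hlam.ne' hD hB.ne' hmu.ne', hexp.1, hexp.2]
    simp only [rpow_neg_one, rpow_zero, one_mul, div_div, one_div, Pi.div_apply,
      Function.comp_apply]
    ring
  · rw [hk1]
    push_cast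
    field_simp
    ring
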